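/- Let K = (O, P) be a dl-program and I ⊆ HB_P. Then I is a weak answer set of K if and only if I' = I ∪ {σ_B : B ∈ DL_P and I ⊭_O B} is a weak answer set of σ(K). -/

import Mathlib

/-!
A formalization of description logic programs (dl-programs) in the sense of
Eiter et al., over an abstract classical first-order semantics, together with
the translations π, π*, π', σ, τ, τ', τ* and the various answer-set semantics
(weak / strong answer sets, weakly / strongly well-supported answer sets) and
Reiter's default logic.
-/

namespace DLP

attribute [local instance] Classical.propDecidable

noncomputable section

/-! ### A minimal classical first-order logic with equality -/

/-- A relational first-order signature: relation symbols with arities,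
and constant symbols (no proper function symbols). -/
structure Sig : Type 1 where
  Rel : Type
  arity : Rel → ℕ
  Const : Type

/-- First-order terms: (named) variables and constants. -/
inductive Term (σ : Sig) : Type where
  | var : ℕ → Term σ
  | const : σ.Const → Term σ

/-- First-order formulas over a signature, with (true) equality. -/
inductive Fml (σ : Sig) : Type where
  | rel : (R : σ.Rel) → (Fin (σ.arity R) → Term σ) → Fml σ
  | eq : Term σ → Term σ → Fml σ
  | falsum : Fml σ
  | imp : Fml σ → Fml σ → Fml σ
  | all : ℕ → Fml σ → Fml σ

namespace Fml
variable {σ : Sig}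

def not (f : Fml σ) : Fml σ := f.imp .falsum

def verum : Fml σ := Fml.not .falsum

def and (f g : Fml σ) : Fml σ := Fml.not (f.imp g.not)

/-- Finite (syntactic) conjunction. -/
def conjList (l : List (Fml σ)) : Fml σ := l.foldr Fml.and verum

end Fml

/-- A first-order structure: a nonempty domain together with interpretations
of the constant and relation symbols. -/
structure Struc (σ : Sig) : Type 1 where
  Dom : Type
  dne : Nonempty Dom
  cI : σ.Const → Dom
  rI : (R : σ.Rel) → (Fin (σ.arity R) → Dom) → Prop

/-- Value of a term in a structure under a variable assignment. -/
def Term.val {σ : Sig} (M : Struc σ) (env : ℕ → M.Dom) : Term σ → M.Dom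
  | .var n => env n
  | .const c => M.cI c

/-- Tarskian satisfaction. -/
def Fml.Sat {σ : Sig} (M : Struc σ) : (ℕ → M.Dom) → Fml σ → Prop
  | env, .rel R ts => M.rI R fun i => (ts i).val M env
  | env, .eq t u => t.val M env = u.val M env
  | _, .falsum => False
  | env, .imp f g => f.Sat M env → g.Sat M env
  | env, .all n f => ∀ d : M.Dom, f.Sat M (Function.update env n d)

/-- A structure models a formula if it satisfies it under every assignment. -/
def Struc.models {σ : Sig} (M : Struc σ) (φ : Fml σ) : Prop := ∀ env, φ.Sat M env

def Struc.modelsSet {σ : Sig} (M : Struc σ) (Γ : Set (Fml σ)) : Prop := ∀ φ ∈ Γ, M.models φ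

/-- Classical first-order entailment `Γ ⊨ φ`. -/
def Entails {σ : Sig} (Γ : Set (Fml σ)) (φ : Fml σ) : Prop :=
  ∀ M : Struc σ, M.modelsSet Γ → M.models φ

/-- Satisfiability of a set of sentences. -/
def SatSet {σ : Sig} (Γ : Set (Fml σ)) : Prop := ∃ M : Struc σ, M.modelsSet Γ

/-- `Th Γ` is the set of classical consequences of `Γ`. -/
def Th {σ : Sig} (Γ : Set (Fml σ)) : Set (Fml σ) := { φ | Entails Γ φ }

/-- The relation symbols occurring in a formula. -/
def Fml.RelIn {σ : Sig} : Fml σ → Set σ.Rel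
  | .rel R _ => {R}
  | .eq _ _ => ∅
  | .falsum => ∅
  | .imp f g => f.RelIn ∪ g.RelIn
  | .all _ f => f.RelIn

/-- Arity-preserving signature morphisms. -/
structure SigHom (σ τ : Sig) where
  onRel : σ.Rel → τ.Rel
  har : ∀ R, τ.arity (onRel R) = σ.arity R
  onConst : σ.Const → τ.Const

def Term.map {σ τ : Sig} (h : SigHom σ τ) : Term σ → Term τ
  | .var n => .var n
  | .const c => .const (h.onConst c)

def Fml.map {σ τ : Sig} (h : SigHom σ τ) : Fml σ → Fml τ
  | .rel R ts => .rel (h.onRel R) fun i => (ts (Fin.cast (h.har R) i)).map h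
  | .eq t u => .eq (t.map h) (u.map h)
  | .falsum => .falsum
  | .imp f g => .imp (f.map h) (g.map h)
  | .all n f => .all n (f.map h)

/-! ### Dl-programs -/

/-- The vocabulary of a dl-program: ontology relation symbols, program
predicate symbols (disjoint from the former), and a finite nonempty set of
constant symbols. -/
structure DLSig : Type 1 where
  Rel : Type
  rArity : Rel → ℕ
  PP : Type
  pArity : PP → ℕ
  Const : Type
  cne : Nonempty Const
  cfin : Fintype Const

instance (S : DLSig) : Nonempty S.Const := S.cne
instance (S : DLSig) : Fintype S.Const := S.cfin

/-- The combined first-order signature of ontology relations and program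
predicates. -/
def DLSig.fol (S : DLSig) : Sig :=
  ⟨S.Rel ⊕ S.PP, Sum.elim S.rArity S.pArity, S.Const⟩

/-- A ground program atom `p(c⃗)`. -/
structure PAtom (S : DLSig) where
  p : S.PP
  args : Fin (S.pArity p) → S.Const

/-- A program atom as a first-order sentence. -/
def PAtom.fml {S : DLSig} (a : PAtom S) : Fml S.fol :=
  .rel (Sum.inr a.p) fun i => .const (a.args i)

/-- An entry `S op p` of the input list of a dl-atom: `S` is an ontology
relation symbol or a negated one (flag `neg`), `op` is `⊕` (`plus = true`) or
the constraint operator `⊖` (`plus = false`), and `p` is a program predicate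
of the same arity. -/
structure DLEntry (S : DLSig) where
  n : ℕ
  R : S.Rel
  hR : S.rArity R = n
  neg : Bool
  plus : Bool
  p : S.PP
  hp : S.pArity p = n

/-- The ground literal `S(e⃗)` (possibly negated) for an entry. -/
def DLEntry.lit {S : DLSig} (en : DLEntry S) (e : Fin en.n → S.Const) : Fml S.fol :=
  let base : Fml S.fol := .rel (Sum.inl en.R) fun i => .const (e (Fin.cast en.hR i))
  if en.neg then base.not else base

/-- The ground program atom `p(e⃗)` for an entry. -/
def DLEntry.patom {S : DLSig} (en : DLEntry S) (e : Fin en.n → S.Const) : PAtom S :=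
  ⟨en.p, fun i => e (Fin.cast en.hp i)⟩

/-- The input `A_i(I)` contributed by the entry under interpretation `I`:
`{S(e⃗) : p(e⃗) ∈ I}` for `⊕`, and `{¬S(e⃗) : p(e⃗) ∉ I}` for `⊖`. -/
def DLEntry.input {S : DLSig} (en : DLEntry S) (I : Set (PAtom S)) : Set (Fml S.fol) :=
  if en.plus then { φ | ∃ e, en.patom e ∈ I ∧ φ = en.lit e }
  else { φ | ∃ e, en.patom e ∉ I ∧ φ = (en.lit e).not }

/-- A ground dl-atom `DL[S₁ op₁ p₁, …, S_m op_m p_m; Q](t⃗)`, with `Q(t⃗)` a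
sentence of the ontology language. -/
structure DLAtom (S : DLSig) where
  entries : List (DLEntry S)
  Q : Fml S.fol

/-- Satisfaction of a dl-atom: `I ⊨_O A` iff `O(I;λ) ⊨ Q(t⃗)`. -/
def SatDL {S : DLSig} (O : Set (Fml S.fol)) (I : Set (PAtom S)) (A : DLAtom S) : Prop :=
  Entails (O ∪ ⋃ en ∈ A.entries, en.input I) A.Q

/-- A body element of a dl-rule: a program atom or a dl-atom. -/
inductive BElem (S : DLSig) where
  | atom : PAtom S → BElem S
  | dl : DLAtom S → BElem S

/-- A dl-rule `head ← pos, not neg`. -/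
structure Rule (S : DLSig) where
  head : PAtom S
  pos : List (BElem S)
  neg : List (BElem S)

/-- Satisfaction of a body element. -/
def SatB {S : DLSig} (O : Set (Fml S.fol)) (I : Set (PAtom S)) : BElem S → Prop
  | .atom a => a ∈ I
  | .dl A => SatDL O I A

/-- The program predicates occurring in a body element (including the input
predicates of dl-atoms). -/
def BElem.preds {S : DLSig} : BElem S → Set S.PP
  | .atom a => {a.p}
  | .dl A => { q | ∃ en ∈ A.entries, en.p = q }

/-- The program predicates occurring in a rule. -/
def Rule.preds {S : DLSig} (r : Rule S) : Set S.PP :=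
  {r.head.p} ∪ (⋃ b ∈ r.pos, b.preds) ∪ (⋃ b ∈ r.neg, b.preds)

/-- The Herbrand base of a program: all ground atoms built from program
predicates occurring in `P` and the constants. -/
def HB {S : DLSig} (P : Set (Rule S)) : Set (PAtom S) :=
  { a | ∃ r ∈ P, a.p ∈ r.preds }

/-- The dl-atoms occurring in `P`. -/
def DLatoms {S : DLSig} (P : Set (Rule S)) : Set (DLAtom S) :=
  { A | ∃ r ∈ P, BElem.dl A ∈ r.pos ∨ BElem.dl A ∈ r.neg }

/-- A dl-atom is monotonic relative to `K = (O,P)`. -/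
def Monotonic {S : DLSig} (O : Set (Fml S.fol)) (P : Set (Rule S)) (A : DLAtom S) : Prop :=
  ∀ ⦃I I' : Set (PAtom S)⦄, I ⊆ I' → I' ⊆ HB P → SatDL O I A → SatDL O I' A

/-- A formula of the ontology language: no program predicate occurs in it. -/
def OntoFml {S : DLSig} (φ : Fml S.fol) : Prop := ∀ p : S.PP, Sum.inr p ∉ φ.RelIn

/-- The immediate-consequence operator of a positive program. -/
def gamma {S : DLSig} (O : Set (Fml S.fol)) (P : Set (Rule S)) (I : Set (PAtom S)) :
    Set (PAtom S) :=
  { a | ∃ r ∈ P, r.head = a ∧ ∀ b ∈ r.pos, SatB O I b }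

def gammaIter {S : DLSig} (O : Set (Fml S.fol)) (P : Set (Rule S)) : ℕ → Set (PAtom S)
  | 0 => ∅
  | k + 1 => gamma O P (gammaIter O P k)

/-- The least fixpoint of `γ`, as the union of its iterates from `∅`. -/
def lfpGamma {S : DLSig} (O : Set (Fml S.fol)) (P : Set (Rule S)) : Set (PAtom S) :=
  ⋃ k, gammaIter O P k

/-- The strong dl-transform `sP_O^I`. -/
def sReduct {S : DLSig} (O : Set (Fml S.fol)) (P : Set (Rule S)) (I : Set (PAtom S)) :
    Set (Rule S) :=
  { r' | ∃ r ∈ P,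
      (∀ A : DLAtom S, BElem.dl A ∈ r.pos → ¬ Monotonic O P A → SatDL O I A) ∧
      (∀ b ∈ r.neg, ¬ SatB O I b) ∧
      r' = ⟨r.head,
            r.pos.filter fun b => decide (match b with
              | .atom _ => True
              | .dl A => Monotonic O P A), []⟩ }

/-- The weak dl-transform `wP_O^I`. -/
def wReduct {S : DLSig} (O : Set (Fml S.fol)) (P : Set (Rule S)) (I : Set (PAtom S)) :
    Set (Rule S) :=
  { r' | ∃ r ∈ P,
      (∀ A : DLAtom S, BElem.dl A ∈ r.pos → SatDL O I A) ∧
      (∀ b ∈ r.neg, ¬ SatB O I b) ∧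
      r' = ⟨r.head,
            r.pos.filter fun b => decide (∃ a, b = BElem.atom a), []⟩ }

/-- `I` is a strong answer set of `K = (O,P)`. -/
def StrongAS {S : DLSig} (O : Set (Fml S.fol)) (P : Set (Rule S)) (I : Set (PAtom S)) : Prop :=
  I = lfpGamma O (sReduct O P I)

/-- `I` is a weak answer set of `K = (O,P)`. -/
def WeakAS {S : DLSig} (O : Set (Fml S.fol)) (P : Set (Rule S)) (I : Set (PAtom S)) : Prop :=
  I = lfpGamma O (wReduct O P I)

end

end DLP
namespace DLP
noncomputable section
attribute [local instance] Classical.propDecidable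

/-! ### The translation π (and π*) eliminating the constraint operator -/

variable {S : DLSig}

/-- The signature of `π(K)`: fresh predicates `π_p` (second summand) and fresh
propositional atoms `π_B` indexed by dl-atoms (third summand). -/
def piSig (S : DLSig) : DLSig where
  Rel := S.Rel
  rArity := S.rArity
  PP := S.PP ⊕ (S.PP ⊕ DLAtom S)
  pArity := Sum.elim S.pArity (Sum.elim S.pArity fun _ => 0)
  Const := S.Const
  cne := S.cne
  cfin := S.cfin

def piHom (S : DLSig) : SigHom S.fol (piSig S).fol :=
  ⟨Sum.map id Sum.inl, fun R => by cases R <;> rfl, id⟩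

def embA {S : DLSig} (a : PAtom S) : PAtom (piSig S) := ⟨Sum.inl a.p, a.args⟩

def embEntry (en : DLEntry S) : DLEntry (piSig S) :=
  ⟨en.n, en.R, en.hR, en.neg, en.plus, Sum.inl en.p, en.hp⟩

/-- A dl-atom, embedded unchanged. -/
def embDL (A : DLAtom S) : DLAtom (piSig S) :=
  ⟨A.entries.map embEntry, A.Q.map (piHom S)⟩

/-- `π(λ)`: replace each `S ⊖ p` by `¬S ⊕ π_p`. -/
def piEntry (en : DLEntry S) : DLEntry (piSig S) :=
  if en.plus then embEntry en
  else ⟨en.n, en.R, en.hR, !en.neg, true, Sum.inr (Sum.inl en.p), en.hp⟩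

def piDL (A : DLAtom S) : DLAtom (piSig S) :=
  ⟨A.entries.map piEntry, A.Q.map (piHom S)⟩

/-- The fresh propositional atom `π_B`. -/
def piBAtom (B : DLAtom S) : PAtom (piSig S) :=
  ⟨Sum.inr (Sum.inr B), fun i => i.elim0⟩

/-- The fresh atom `π_p(e⃗)`. -/
def piPAtom (p : S.PP) (e : Fin (S.pArity p) → S.Const) : PAtom (piSig S) :=
  ⟨Sum.inr (Sum.inl p), e⟩

/-- `π(B)` for a positive body element (the part that stays positive). -/
def piPos (O : Set (Fml S.fol)) (P : Set (Rule S)) : BElem S → Option (BElem (piSig S))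
  | .atom a => some (.atom (embA a))
  | .dl B => if Monotonic O P B then some (.dl (embDL B)) else none

/-- `π(B)` for a positive body element (the part moved under `not`). -/
def piPosNeg (O : Set (Fml S.fol)) (P : Set (Rule S)) : BElem S → Option (BElem (piSig S))
  | .dl B => if Monotonic O P B then none else some (.atom (piBAtom B))
  | _ => none

/-- `π(not B)` for a negative body element. -/
def piNeg : BElem S → BElem (piSig S)
  | .atom a => .atom (embA a)
  | .dl B => .dl (piDL B)

/-- The main rule (i) of `π(r)`. -/
def piRuleMain (O : Set (Fml S.fol)) (P : Set (Rule S)) (r : Rule S) : Rule (piSig S) :=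
  ⟨embA r.head, r.pos.filterMap (piPos O P),
    r.pos.filterMap (piPosNeg O P) ++ r.neg.map piNeg⟩

/-- `S ⊖ p` occurs in the dl-atom `A`. -/
def ominusIn (A : DLAtom S) (p : S.PP) : Prop :=
  ∃ en ∈ A.entries, en.plus = false ∧ en.p = p

/-- The program `π(P)`. -/
def piProg (O : Set (Fml S.fol)) (P : Set (Rule S)) : Set (Rule (piSig S)) :=
  (⋃ r ∈ P, {piRuleMain O P r}) ∪
  { r' | ∃ r ∈ P, ∃ B, BElem.dl B ∈ r.pos ∧ ¬ Monotonic O P B ∧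
      r' = ⟨piBAtom B, [], [.dl (piDL B)]⟩ } ∪
  { r' | ∃ r ∈ P, ∃ B, (BElem.dl B ∈ r.pos ∨ BElem.dl B ∈ r.neg) ∧ ¬ Monotonic O P B ∧
      ∃ p, ominusIn B p ∧ ∃ e, r' = ⟨piPAtom p e, [], [.atom (embA ⟨p, e⟩)]⟩ }

/-- The ontology, over the extended signature. -/
def piO (O : Set (Fml S.fol)) : Set (Fml (piSig S).fol) := Fml.map (piHom S) '' O

/-- `π₁(I) = {π_p(c⃗) ∈ HB_{π(P)} : p(c⃗) ∉ I}`. -/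
def pi1 (O : Set (Fml S.fol)) (P : Set (Rule S)) (I : Set (PAtom S)) :
    Set (PAtom (piSig S)) :=
  { a | ∃ p e, a = piPAtom p e ∧ a ∈ HB (piProg O P) ∧ (⟨p, e⟩ : PAtom S) ∉ I }

/-- `π₂(I) = {π_B ∈ HB_{π(P)} : B ∈ DL_P^? and I ⊭_O B}`. -/
def pi2 (O : Set (Fml S.fol)) (P : Set (Rule S)) (I : Set (PAtom S)) :
    Set (PAtom (piSig S)) :=
  { a | ∃ B ∈ DLatoms P, ¬ Monotonic O P B ∧ ¬ SatDL O I B ∧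
      a = piBAtom B ∧ a ∈ HB (piProg O P) }

/-- `π(I) = I ∪ π₁(I) ∪ π₂(I)`. -/
def piSet (O : Set (Fml S.fol)) (P : Set (Rule S)) (I : Set (PAtom S)) :
    Set (PAtom (piSig S)) :=
  (embA '' I) ∪ pi1 O P I ∪ pi2 O P I

/-! The translation π*, which treats every dl-atom the way π treats
nonmonotonic dl-atoms. -/

def piStarPos : BElem S → Option (BElem (piSig S))
  | .atom a => some (.atom (embA a))
  | .dl _ => none

def piStarPosNeg : BElem S → Option (BElem (piSig S))
  | .dl B => some (.atom (piBAtom B))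
  | _ => none

def piStarRuleMain (r : Rule S) : Rule (piSig S) :=
  ⟨embA r.head, r.pos.filterMap piStarPos,
    r.pos.filterMap piStarPosNeg ++ r.neg.map piNeg⟩

/-- The program `π*(P)`. -/
def piStarProg (P : Set (Rule S)) : Set (Rule (piSig S)) :=
  (⋃ r ∈ P, {piStarRuleMain r}) ∪
  { r' | ∃ r ∈ P, ∃ B, BElem.dl B ∈ r.pos ∧ r' = ⟨piBAtom B, [], [.dl (piDL B)]⟩ } ∪
  { r' | ∃ r ∈ P, ∃ B, (BElem.dl B ∈ r.pos ∨ BElem.dl B ∈ r.neg) ∧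
      ∃ p, ominusIn B p ∧ ∃ e, r' = ⟨piPAtom p e, [], [.atom (embA ⟨p, e⟩)]⟩ }

/-- `π*(I)`. -/
def piStarSet (O : Set (Fml S.fol)) (P : Set (Rule S)) (I : Set (PAtom S)) :
    Set (PAtom (piSig S)) :=
  (embA '' I) ∪
  { a | ∃ p e, a = piPAtom p e ∧ a ∈ HB (piStarProg P) ∧ (⟨p, e⟩ : PAtom S) ∉ I } ∪
  { a | ∃ B ∈ DLatoms P, ¬ SatDL O I B ∧ a = piBAtom B ∧ a ∈ HB (piStarProg P) }

end
end DLP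
namespace DLP
noncomputable section
attribute [local instance] Classical.propDecidable

variable {S : DLSig}

/-! ### The translation π' of Eiter et al. (well-founded semantics paper) -/

/-- The signature of `π'(K)`: fresh ontology relation symbols `S'_p` and fresh
program predicates `p̄`, one of each for every program predicate `p`. -/
def piPrimeSig (S : DLSig) : DLSig where
  Rel := S.Rel ⊕ S.PP
  rArity := Sum.elim S.rArity S.pArity
  PP := S.PP ⊕ S.PP
  pArity := Sum.elim S.pArity S.pArity
  Const := S.Const
  cne := S.cne
  cfin := S.cfin

def piPrimeHom (S : DLSig) : SigHom S.fol (piPrimeSig S).fol :=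
  ⟨Sum.map Sum.inl Sum.inl, fun R => by cases R <;> rfl, id⟩

def embA' (a : PAtom S) : PAtom (piPrimeSig S) := ⟨Sum.inl a.p, a.args⟩

/-- The fresh atom `p̄(e⃗)`. -/
def barA (p : S.PP) (e : Fin (S.pArity p) → S.Const) : PAtom (piPrimeSig S) :=
  ⟨Sum.inr p, e⟩

/-- Replace `S ⊖ p` by `¬S ⊕ p̄` in an input entry. -/
def piPrimeEntry (en : DLEntry S) : DLEntry (piPrimeSig S) :=
  if en.plus then ⟨en.n, Sum.inl en.R, en.hR, en.neg, true, Sum.inl en.p, en.hp⟩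
  else ⟨en.n, Sum.inl en.R, en.hR, !en.neg, true, Sum.inr en.p, en.hp⟩

def piPrimeDL (A : DLAtom S) : DLAtom (piPrimeSig S) :=
  ⟨A.entries.map piPrimeEntry, A.Q.map (piPrimeHom S)⟩

def piPrimeB : BElem S → BElem (piPrimeSig S)
  | .atom a => .atom (embA' a)
  | .dl A => .dl (piPrimeDL A)

def piPrimeRule (r : Rule S) : Rule (piPrimeSig S) :=
  ⟨embA' r.head, r.pos.map piPrimeB, r.neg.map piPrimeB⟩

/-- The auxiliary dl-atom `DL[S'_p ⊕ p; S'_p](e⃗)`. -/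
def auxDL (p : S.PP) (e : Fin (S.pArity p) → S.Const) : DLAtom (piPrimeSig S) :=
  ⟨[⟨S.pArity p, Sum.inr p, rfl, false, true, Sum.inl p, rfl⟩],
   Fml.rel (σ := (piPrimeSig S).fol) (Sum.inl (Sum.inr p)) fun i => .const (e i)⟩

/-- The program `π'(P)`. -/
def piPrimeProg (P : Set (Rule S)) : Set (Rule (piPrimeSig S)) :=
  (⋃ r ∈ P, {piPrimeRule r}) ∪
  { r' | ∃ p : S.PP, (∃ A ∈ DLatoms P, ominusIn A p) ∧
      ∃ e, r' = ⟨barA p e, [], [.dl (auxDL p e)]⟩ }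

def piPrimeO (O : Set (Fml S.fol)) : Set (Fml (piPrimeSig S).fol) :=
  Fml.map (piPrimeHom S) '' O

/-! ### The translation σ making all dl-atoms occur negatively -/

/-- The signature of `σ(K)`: a fresh propositional atom `σ_B` for every
dl-atom `B`. -/
def sigmaSig (S : DLSig) : DLSig where
  Rel := S.Rel
  rArity := S.rArity
  PP := S.PP ⊕ DLAtom S
  pArity := Sum.elim S.pArity fun _ => 0
  Const := S.Const
  cne := S.cne
  cfin := S.cfin

def sigmaHom (S : DLSig) : SigHom S.fol (sigmaSig S).fol :=
  ⟨Sum.map id Sum.inl, fun R => by cases R <;> rfl, id⟩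

def sigmaEmbA (a : PAtom S) : PAtom (sigmaSig S) := ⟨Sum.inl a.p, a.args⟩

def sigmaBAtom (B : DLAtom S) : PAtom (sigmaSig S) := ⟨Sum.inr B, fun i => i.elim0⟩

def sigmaEmbEntry (en : DLEntry S) : DLEntry (sigmaSig S) :=
  ⟨en.n, en.R, en.hR, en.neg, en.plus, Sum.inl en.p, en.hp⟩

def sigmaEmbDL (A : DLAtom S) : DLAtom (sigmaSig S) :=
  ⟨A.entries.map sigmaEmbEntry, A.Q.map (sigmaHom S)⟩

def sigmaEmbB : BElem S → BElem (sigmaSig S)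
  | .atom a => .atom (sigmaEmbA a)
  | .dl A => .dl (sigmaEmbDL A)

def sigmaRule (r : Rule S) : Rule (sigmaSig S) :=
  ⟨sigmaEmbA r.head,
   r.pos.filterMap fun b => match b with
     | .atom a => some (.atom (sigmaEmbA a))
     | .dl _ => none,
   (r.pos.filterMap fun b => match b with
     | .dl B => some (.atom (sigmaBAtom B))
     | _ => none) ++ r.neg.map sigmaEmbB⟩

/-- The program `σ(P)`. -/
def sigmaProg (P : Set (Rule S)) : Set (Rule (sigmaSig S)) :=
  (⋃ r ∈ P, {sigmaRule r}) ∪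
  { r' | ∃ B ∈ DLatoms P, r' = ⟨sigmaBAtom B, [], [.dl (sigmaEmbDL B)]⟩ }

def sigmaO (O : Set (Fml S.fol)) : Set (Fml (sigmaSig S).fol) :=
  Fml.map (sigmaHom S) '' O

end
end DLP
namespace DLP
noncomputable section
attribute [local instance] Classical.propDecidable

/-! ### The congruence rewriting of equality -/

/-- Extend a signature by a fresh binary relation symbol `≈`. -/
def eqExt (σ : Sig) : Sig where
  Rel := σ.Rel ⊕ Unit
  arity := Sum.elim σ.arity fun _ => 2
  Const := σ.Const

def eqHom (σ : Sig) : SigHom σ (eqExt σ) := ⟨Sum.inl, fun _ => rfl, id⟩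

/-- The atom `t ≈ u`. -/
def approx {σ : Sig} (t u : Term (eqExt σ)) : Fml (eqExt σ) :=
  .rel (Sum.inr ()) ![t, u]

/-- Replace (true) equality by the fresh symbol `≈` throughout a formula. -/
def replaceEq {σ : Sig} : Fml σ → Fml (eqExt σ)
  | .rel R ts => .rel (Sum.inl R) fun i => (ts i).map (eqHom σ)
  | .eq t u => approx (t.map (eqHom σ)) (u.map (eqHom σ))
  | .falsum => .falsum
  | .imp f g => .imp (replaceEq f) (replaceEq g)
  | .all n f => .all n (replaceEq f)

def allsList {σ : Sig} (l : List ℕ) (f : Fml σ) : Fml σ := l.foldr Fml.all f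

/-- The reflexivity axiom `∀x (x ≈ x)`. -/
def approxRefl {σ : Sig} : Fml (eqExt σ) := .all 0 (approx (.var 0) (.var 0))

/-- The predicate-replacement (congruence) axiom for a relation symbol `R`:
`∀x⃗ y⃗ ((x⃗ ≈ y⃗) ⊃ (R(x⃗) ⊃ R(y⃗)))`. -/
def congrAx {σ : Sig} (R : σ.Rel) : Fml (eqExt σ) :=
  allsList (List.range (2 * σ.arity R)) <|
    (Fml.conjList ((List.finRange (σ.arity R)).map fun i =>
        approx (.var (i : ℕ)) (.var (σ.arity R + (i : ℕ))))).imp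
      ((Fml.rel (σ := eqExt σ) (Sum.inl R) fun i => .var (i : ℕ)).imp
        (Fml.rel (σ := eqExt σ) (Sum.inl R) fun i => .var (σ.arity R + (i : ℕ))))

variable {S : DLSig}

/-- `τ(O)`: the congruence rewriting of the ontology, together with the
reflexivity and predicate-replacement axioms for the relation symbols of the
ontology language occurring in `O`. -/
def tauO (O : Set (Fml S.fol)) : Set (Fml (eqExt S.fol)) :=
  (replaceEq '' O) ∪ {approxRefl} ∪
  { φ | ∃ R : S.Rel, (∃ ψ ∈ O, Sum.inl R ∈ ψ.RelIn) ∧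
      φ = congrAx (σ := S.fol) (Sum.inl R) }

/-- `τ(S op p)`: the conjunction over `p(c⃗) ∈ HB_P` of `p(c⃗) ⊃ S(c⃗)` (for
`⊕`), resp. `¬p(c⃗) ⊃ ¬S(c⃗)` (for `⊖`). -/
def tauEntry (P : Set (Rule S)) (en : DLEntry S) : Fml S.fol :=
  Fml.conjList
    (((Finset.univ : Finset (Fin en.n → S.Const)).toList.filter
        fun e => decide (en.patom e ∈ HB P)).map
      fun e =>
        if en.plus then ((en.patom e).fml).imp (en.lit e)
        else ((en.patom e).fml).not.imp (en.lit e).not)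

/-- `τ(A)` for a dl-atom `A = DL[λ; Q](t⃗)`. -/
def tauDL (P : Set (Rule S)) (A : DLAtom S) : Fml (eqExt S.fol) :=
  ((Fml.conjList (A.entries.map (tauEntry P))).map (eqHom S.fol)).imp (replaceEq A.Q)

/-- A program atom, as a sentence over the language with `≈`. -/
def PAtom.efml (a : PAtom S) : Fml (eqExt S.fol) := a.fml.map (eqHom S.fol)

/-- `τ(B)` for a body element. -/
def tauB (P : Set (Rule S)) : BElem S → Fml (eqExt S.fol)
  | .atom a => a.efml
  | .dl A => tauDL P A

/-! ### Default logic -/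

/-- A (closed) default `α : β₁,…,β_n / γ`. -/
structure Dft (σ : Sig) where
  pre : Fml σ
  jus : List (Fml σ)
  con : Fml σ

/-- A (closed) default theory `(D, W)`. -/
structure DThy (σ : Sig) where
  D : Set (Dft σ)
  W : Set (Fml σ)

/-- The stages `E_i` of the extension construction relative to a candidate
extension `E`. -/
def extStage {σ : Sig} (Δ : DThy σ) (E : Set (Fml σ)) : ℕ → Set (Fml σ)
  | 0 => Δ.W
  | i + 1 => Th (extStage Δ E i) ∪
      { γ | ∃ d ∈ Δ.D, d.pre ∈ extStage Δ E i ∧ (∀ β ∈ d.jus, Fml.not β ∉ E) ∧ γ = d.con }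

/-- `E` is an extension of the default theory `Δ`. -/
def IsExtension {σ : Sig} (Δ : DThy σ) (E : Set (Fml σ)) : Prop :=
  E = ⋃ i, extStage Δ E i

/-- The default theory `τ(K) = (τ(P), τ(O))`. -/
def tauThy (O : Set (Fml S.fol)) (P : Set (Rule S)) : DThy (eqExt S.fol) where
  D := { d | ∃ r ∈ P,
      d = ⟨Fml.conjList (r.pos.map (tauB P)),
           r.neg.map fun b => (tauB P b).not, r.head.efml⟩ }
  W := tauO O

/-- The default theory `τ*(K)`: `τ(K)` plus the defaults `: ¬p(c⃗) / ¬p(c⃗)`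
for every `p(c⃗) ∈ HB_P`. -/
def tauStarThy (O : Set (Fml S.fol)) (P : Set (Rule S)) : DThy (eqExt S.fol) where
  D := (tauThy O P).D ∪
    { d | ∃ a ∈ HB P, d = ⟨Fml.verum, [(PAtom.efml a).not], (PAtom.efml a).not⟩ }
  W := tauO O

/-! ### The translation τ' (no congruence rewriting; the ontology is moved
into the antecedents of the translated dl-atoms) -/

/-- `τ'(A)` for a dl-atom `A`; here the finite ontology `O` is identified with
the conjunction of its sentences and equality is kept as true equality. -/
def tauDL' (O : Finset (Fml S.fol)) (P : Set (Rule S)) (A : DLAtom S) : Fml S.fol :=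
  ((Fml.conjList O.toList).and (Fml.conjList (A.entries.map (tauEntry P)))).imp A.Q

def tauB' (O : Finset (Fml S.fol)) (P : Set (Rule S)) : BElem S → Fml S.fol
  | .atom a => a.fml
  | .dl A => tauDL' O P A

/-- The default theory `τ'(K) = (D, ∅)`. -/
def tauThy' (O : Finset (Fml S.fol)) (P : Set (Rule S)) : DThy S.fol where
  D := { d | ∃ r ∈ P,
      d = ⟨Fml.conjList (r.pos.map (tauB' O P)),
           r.neg.map fun b => (tauB' O P b).not, r.head.fml⟩ }
  W := ∅

/-! ### Well-supported semantics -/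

/-- `I` is a model of `K = (O,P)`. -/
def IsModel (O : Set (Fml S.fol)) (P : Set (Rule S)) (I : Set (PAtom S)) : Prop :=
  ∀ r ∈ P, (∀ b ∈ r.pos, SatB O I b) → (∀ b ∈ r.neg, ¬ SatB O I b) → r.head ∈ I

/-- `(E, I)` up-to satisfies a body element. -/
def UpSat (O : Set (Fml S.fol)) (E I : Set (PAtom S)) : BElem S → Prop
  | .atom a => a ∈ E
  | .dl A => ∀ F, E ⊆ F → F ⊆ I → SatDL O F A

/-- `(E, I)` up-to satisfies the default negation of a body element. -/
def UpSatN (O : Set (Fml S.fol)) (I' I : Set (PAtom S)) : BElem S → Prop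
  | .atom a => a ∉ I
  | .dl A => ¬ ∃ F, I' ⊆ F ∧ F ⊆ I ∧ SatDL O F A

/-- The operator `T_K`. -/
def TK (O : Set (Fml S.fol)) (P : Set (Rule S)) (E I : Set (PAtom S)) : Set (PAtom S) :=
  { a | ∃ r ∈ P, r.head = a ∧ (∀ b ∈ r.pos, UpSat O E I b) ∧ (∀ b ∈ r.neg, UpSatN O E I b) }

def TKiter (O : Set (Fml S.fol)) (P : Set (Rule S)) (I : Set (PAtom S)) : ℕ → Set (PAtom S)
  | 0 => ∅
  | k + 1 => TK O P (TKiter O P I k) I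

/-- `T_K^∞(∅, I)`. -/
def TKinf (O : Set (Fml S.fol)) (P : Set (Rule S)) (I : Set (PAtom S)) : Set (PAtom S) :=
  ⋃ k, TKiter O P I k

/-- The reduct `P^I` dropping negative bodies. -/
def negReduct (O : Set (Fml S.fol)) (P : Set (Rule S)) (I : Set (PAtom S)) : Set (Rule S) :=
  { r' | ∃ r ∈ P, (∀ b ∈ r.neg, ¬ SatB O I b) ∧ r' = ⟨r.head, r.pos, []⟩ }

/-- `I` is a weakly well-supported answer set of `K`. -/
def WWS (O : Set (Fml S.fol)) (P : Set (Rule S)) (I : Set (PAtom S)) : Prop :=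
  IsModel O P I ∧ I = TKinf O (negReduct O P I) I

/-- `I` is a strongly well-supported answer set of `K`. -/
def SWS (O : Set (Fml S.fol)) (P : Set (Rule S)) (I : Set (PAtom S)) : Prop :=
  IsModel O P I ∧ I = TKinf O P I

end
end DLP

/-!
The fresh atoms `σ_B` are facts of the weak dl-transform of `σ(K)` relative to `I'` exactly
when `I ⊭_O B`, and a rule `not σ_B, …` of `σ(P)` survives that transform exactly when the
corresponding rule with `B` survives the weak dl-transform of `K` relative to `I`. Since
dl-atoms of `σ(K)` are evaluated on the embedded copy of `I` only, the weak dl-transform of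
`σ(K)` is the embedded weak dl-transform of `K` together with the facts `σ_B`, so its least
fixpoint is the embedded least fixpoint of `γ` plus these facts.
-/

namespace DLP

attribute [local instance] Classical.propDecidable

section Transfer

variable {σ τ : Sig}

def Struc.comap (h : SigHom σ τ) (M : Struc τ) : Struc σ where
  Dom := M.Dom
  dne := M.dne
  cI c := M.cI (h.onConst c)
  rI R v := M.rI (h.onRel R) fun i => v (Fin.cast (h.har R) i)

theorem Term.val_map (h : SigHom σ τ) (M : Struc τ) (env : ℕ → M.Dom) (t : Term σ) :
    (t.map h).val M env = t.val (M.comap h) env := by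
  cases t <;> rfl

theorem Fml.sat_map (h : SigHom σ τ) (M : Struc τ) (φ : Fml σ) (env : ℕ → M.Dom) :
    (φ.map h).Sat M env ↔ φ.Sat (M.comap h) env := by
  induction φ generalizing env with
  | rel R ts =>
    show M.rI _ _ ↔ M.rI _ _
    simp only [Term.val_map]
  | eq t u =>
    show _ = _ ↔ _ = _
    rw [Term.val_map, Term.val_map]
    exact Iff.rfl
  | falsum => exact Iff.rfl
  | imp f g ihf ihg => exact imp_congr (ihf env) (ihg env)
  | all n f ih => exact forall_congr' fun d => ih _

theorem entails_map_iff (h : SigHom σ τ)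
    (hsurj : ∀ M : Struc σ, ∃ M' : Struc τ, M'.comap h = M)
    (Γ : Set (Fml σ)) (φ : Fml σ) :
    Entails (Fml.map h '' Γ) (φ.map h) ↔ Entails Γ φ := by
  constructor
  · intro hent M hM env
    obtain ⟨M', rfl⟩ := hsurj M
    refine (Fml.sat_map h M' φ env).mp (hent M' ?_ env)
    rintro _ ⟨ψ, hψ, rfl⟩ env'
    exact (Fml.sat_map h M' ψ env').mpr (hM ψ hψ env')
  · intro hent M' hM' env
    refine (Fml.sat_map h M' φ env).mpr (hent (M'.comap h) ?_ env)
    intro ψ hψ env'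
    exact (Fml.sat_map h M' ψ env').mp (hM' _ ⟨ψ, hψ, rfl⟩ env')

end Transfer

theorem image_union_eq_image_union_iff {α β : Type*} {f : α → β} (hf : Function.Injective f)
    {F : Set β} (hF : f ⁻¹' F = ∅) {A B : Set α} :
    f '' A ∪ F = f '' B ∪ F ↔ A = B := by
  refine ⟨fun h => ?_, fun h => h ▸ rfl⟩
  simpa only [Set.preimage_union, hF, Set.union_empty, Set.preimage_image_eq _ hf]
    using congrArg (f ⁻¹' ·) h

variable {S : DLSig}

def Rule.fact (a : PAtom S) : Rule S := ⟨a, [], []⟩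

theorem gamma_union (O : Set (Fml S.fol)) (R R' : Set (Rule S)) (X : Set (PAtom S)) :
    gamma O (R ∪ R') X = gamma O R X ∪ gamma O R' X := by
  ext a
  simp only [gamma, Set.mem_union, Set.mem_ofPred_eq, or_and_right, exists_or]

theorem gamma_image_fact (O : Set (Fml S.fol)) (F X : Set (PAtom S)) :
    gamma O (Rule.fact '' F) X = F := by
  ext a
  simp [gamma, Rule.fact]

theorem wReduct_union (O : Set (Fml S.fol)) (P P' : Set (Rule S)) (I : Set (PAtom S)) :
    wReduct O (P ∪ P') I = wReduct O P I ∪ wReduct O P' I := by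
  ext r'
  simp only [wReduct, Set.mem_union, Set.mem_ofPred_eq, or_and_right, exists_or]

theorem lfpGamma_eq_iUnion_succ (O : Set (Fml S.fol)) (R : Set (Rule S)) :
    lfpGamma O R = ⋃ k, gammaIter O R (k + 1) := by
  rw [lfpGamma, ← Set.union_iUnion_nat_succ]
  exact Set.empty_union _

section Sigma

theorem sigmaHom_comap_surjective (M : Struc S.fol) :
    ∃ M' : Struc (sigmaSig S).fol, M'.comap (sigmaHom S) = M := by
  refine ⟨{ Dom := M.Dom, dne := M.dne, cI := M.cI,
            rI := fun R => match R with
              | Sum.inl r => M.rI (Sum.inl r)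
              | Sum.inr (Sum.inl p) => M.rI (Sum.inr p)
              | Sum.inr (Sum.inr _) => fun _ => False }, ?_⟩
  cases M
  unfold Struc.comap
  congr 1
  funext R v
  cases R <;> rfl

theorem sigmaEmbA_injective : Function.Injective (sigmaEmbA (S := S)) := by
  rintro ⟨p, args⟩ ⟨q, args'⟩ h
  injection h with hp hargs
  cases hp
  cases hargs
  rfl

theorem sigmaEmbA_ne_sigmaBAtom (a : PAtom S) (B : DLAtom S) : sigmaEmbA a ≠ sigmaBAtom B :=
  fun h => Sum.inl_ne_inr (congrArg PAtom.p h)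

theorem lit_map_sigmaHom (en : DLEntry S) (e : Fin en.n → S.Const) :
    (en.lit e).map (sigmaHom S) = (sigmaEmbEntry en).lit e := by
  obtain ⟨n, R, hR, neg, plus, p, hp⟩ := en
  cases neg <;> rfl

theorem sigmaEmbEntry_input (en : DLEntry S) (I' : Set (PAtom (sigmaSig S))) :
    (sigmaEmbEntry en).input I' = Fml.map (sigmaHom S) '' en.input (sigmaEmbA ⁻¹' I') := by
  unfold DLEntry.input
  change (if en.plus then _ else _) = _
  split
  · ext φ
    constructor
    · rintro ⟨e, he, rfl⟩
      exact ⟨_, ⟨e, he, rfl⟩, lit_map_sigmaHom en e⟩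
    · rintro ⟨_, ⟨e, he, rfl⟩, rfl⟩
      exact ⟨e, he, lit_map_sigmaHom en e⟩
  · ext φ
    constructor
    · rintro ⟨e, he, rfl⟩
      exact ⟨_, ⟨e, he, rfl⟩, congrArg Fml.not (lit_map_sigmaHom en e)⟩
    · rintro ⟨_, ⟨e, he, rfl⟩, rfl⟩
      exact ⟨e, he, congrArg Fml.not (lit_map_sigmaHom en e)⟩

theorem satDL_sigmaEmbDL (O : Set (Fml S.fol)) (I' : Set (PAtom (sigmaSig S))) (B : DLAtom S) :
    SatDL (sigmaO O) I' (sigmaEmbDL B) ↔ SatDL O (sigmaEmbA ⁻¹' I') B := by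
  have hinput : (⋃ en ∈ (sigmaEmbDL B).entries, en.input I')
      = Fml.map (sigmaHom S) '' ⋃ en ∈ B.entries, en.input (sigmaEmbA ⁻¹' I') := by
    simp only [sigmaEmbDL, List.mem_map, Set.iUnion_exists, Set.biUnion_and',
      Set.iUnion_iUnion_eq_right, sigmaEmbEntry_input, Set.image_iUnion]
  rw [SatDL, SatDL, hinput, sigmaO, ← Set.image_union]
  exact entails_map_iff _ sigmaHom_comap_surjective _ _

theorem satB_sigmaEmbB (O : Set (Fml S.fol)) (I' : Set (PAtom (sigmaSig S))) (b : BElem S) :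
    SatB (sigmaO O) I' (sigmaEmbB b) ↔ SatB O (sigmaEmbA ⁻¹' I') b := by
  cases b with
  | atom a => exact Iff.rfl
  | dl B => exact satDL_sigmaEmbDL O I' B

def sigmaEmbRule (r : Rule S) : Rule (sigmaSig S) :=
  ⟨sigmaEmbA r.head, r.pos.map sigmaEmbB, r.neg.map sigmaEmbB⟩

theorem gamma_image_sigmaEmbRule (O : Set (Fml S.fol)) (R : Set (Rule S))
    (X : Set (PAtom (sigmaSig S))) :
    gamma (sigmaO O) (sigmaEmbRule '' R) X = sigmaEmbA '' gamma O R (sigmaEmbA ⁻¹' X) := by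
  ext a
  simp only [gamma, sigmaEmbRule, Set.mem_image, exists_exists_and_eq_and, List.mem_map,
    forall_exists_index, and_imp, forall_apply_eq_imp_iff₂, satB_sigmaEmbB, Set.mem_ofPred_eq,
    ↓existsAndEq, true_and]
  exact ⟨fun ⟨r, hr, hh, hb⟩ => ⟨r, ⟨hr, hb⟩, hh⟩,
    fun ⟨r, ⟨hr, hb⟩, hh⟩ => ⟨r, hr, hh, hb⟩⟩

theorem gammaIter_succ_sigma (O : Set (Fml S.fol)) (R : Set (Rule S))
    (F : Set (PAtom (sigmaSig S))) (hF : sigmaEmbA ⁻¹' F = ∅) (k : ℕ) :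
    gammaIter (sigmaO O) (sigmaEmbRule '' R ∪ Rule.fact '' F) (k + 1)
      = sigmaEmbA '' gammaIter O R (k + 1) ∪ F := by
  have hstep : ∀ X, gamma (sigmaO O) (sigmaEmbRule '' R ∪ Rule.fact '' F) X
      = sigmaEmbA '' gamma O R (sigmaEmbA ⁻¹' X) ∪ F := fun X => by
    rw [gamma_union, gamma_image_sigmaEmbRule, gamma_image_fact]
  induction k with
  | zero => exact hstep ∅
  | succ k ih =>
    rw [gammaIter, ih, hstep, Set.preimage_union, hF, Set.union_empty,
      Set.preimage_image_eq _ sigmaEmbA_injective]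
    rfl

theorem lfpGamma_sigma (O : Set (Fml S.fol)) (R : Set (Rule S))
    (F : Set (PAtom (sigmaSig S))) (hF : sigmaEmbA ⁻¹' F = ∅) :
    lfpGamma (sigmaO O) (sigmaEmbRule '' R ∪ Rule.fact '' F)
      = sigmaEmbA '' lfpGamma O R ∪ F := by
  simp only [lfpGamma_eq_iUnion_succ, gammaIter_succ_sigma O R F hF, Set.image_iUnion,
    Set.iUnion_union]

theorem sigmaRule_pos (r : Rule S) :
    (sigmaRule r).pos = (r.pos.filter fun b => decide (∃ a, b = BElem.atom a)).map sigmaEmbB := by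
  change List.filterMap _ r.pos = _
  induction r.pos with
  | nil => rfl
  | cons b l ih => cases b <;> simp [ih, sigmaEmbB]

theorem mem_sigmaRule_neg {r : Rule S} {b' : BElem (sigmaSig S)} :
    b' ∈ (sigmaRule r).neg ↔
      (∃ B, BElem.dl B ∈ r.pos ∧ b' = .atom (sigmaBAtom B)) ∨
        ∃ b ∈ r.neg, b' = sigmaEmbB b := by
  simp only [sigmaRule, List.mem_append, List.mem_filterMap, List.mem_map]
  refine or_congr ⟨?_, ?_⟩ (exists_congr fun b => and_congr_right fun _ => eq_comm)
  · rintro ⟨_ | B, hB, h⟩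
    · simp at h
    · exact ⟨B, hB, (Option.some_inj.mp h).symm⟩
  · rintro ⟨B, hB, rfl⟩
    exact ⟨.dl B, hB, rfl⟩

theorem exists_eq_atom_of_mem_sigmaRule_pos {r : Rule S} {b' : BElem (sigmaSig S)}
    (h : b' ∈ (sigmaRule r).pos) : ∃ a, b' = BElem.atom a := by
  rw [sigmaRule_pos, List.mem_map] at h
  obtain ⟨b, hb, rfl⟩ := h
  obtain ⟨a, rfl⟩ := of_decide_eq_true (List.mem_filter.mp hb).2
  exact ⟨_, rfl⟩

theorem sigmaEmbRule_weakReduct (r : Rule S) :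
    sigmaEmbRule ⟨r.head, r.pos.filter (fun b => decide (∃ a, b = BElem.atom a)), []⟩
      = ⟨(sigmaRule r).head,
          (sigmaRule r).pos.filter (fun b => decide (∃ a, b = BElem.atom a)), []⟩ := by
  rw [List.filter_eq_self.mpr fun b hb => decide_eq_true (exists_eq_atom_of_mem_sigmaRule_pos hb),
    sigmaRule_pos]
  rfl

section Reduct

variable (O : Set (Fml S.fol)) (P : Set (Rule S)) (I : Set (PAtom S))

def sigmaFacts : Set (PAtom (sigmaSig S)) :=
  { a | ∃ B ∈ DLatoms P, ¬ SatDL O I B ∧ a = sigmaBAtom B }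

def sigmaSet : Set (PAtom (sigmaSig S)) := sigmaEmbA '' I ∪ sigmaFacts O P I

theorem preimage_sigmaFacts : sigmaEmbA ⁻¹' sigmaFacts O P I = ∅ :=
  Set.eq_empty_of_forall_notMem fun a ⟨B, _, _, h⟩ => sigmaEmbA_ne_sigmaBAtom a B h

theorem preimage_sigmaSet : sigmaEmbA ⁻¹' sigmaSet O P I = I := by
  rw [sigmaSet, Set.preimage_union, preimage_sigmaFacts, Set.union_empty,
    Set.preimage_image_eq _ sigmaEmbA_injective]

theorem sigmaBAtom_mem_sigmaSet {B : DLAtom S} :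
    sigmaBAtom B ∈ sigmaSet O P I ↔ B ∈ DLatoms P ∧ ¬ SatDL O I B := by
  constructor
  · rintro (⟨a, _, h⟩ | ⟨B', hB', hsat, h⟩)
    · exact absurd h (sigmaEmbA_ne_sigmaBAtom a B)
    · obtain rfl : B = B' := Sum.inr.inj (congrArg PAtom.p h)
      exact ⟨hB', hsat⟩
  · rintro ⟨hB, hsat⟩
    exact Or.inr ⟨B, hB, hsat, rfl⟩

theorem sigmaRule_neg_unsat_iff {r : Rule S} (hr : r ∈ P) :
    (∀ b ∈ (sigmaRule r).neg, ¬ SatB (sigmaO O) (sigmaSet O P I) b) ↔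
      (∀ A, BElem.dl A ∈ r.pos → SatDL O I A) ∧ ∀ b ∈ r.neg, ¬ SatB O I b := by
  have hfresh : ∀ B, BElem.dl B ∈ r.pos →
      (¬ SatB (sigmaO O) (sigmaSet O P I) (.atom (sigmaBAtom B)) ↔ SatDL O I B) := fun B hB => by
    simp only [SatB, sigmaBAtom_mem_sigmaSet, not_and, not_not]
    exact ⟨fun h => h ⟨r, hr, Or.inl hB⟩, fun h _ => h⟩
  have hemb : ∀ b, SatB (sigmaO O) (sigmaSet O P I) (sigmaEmbB b) ↔ SatB O I b := fun b => by
    rw [satB_sigmaEmbB, preimage_sigmaSet]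
  constructor
  · intro h
    exact ⟨fun B hB => (hfresh B hB).mp (h _ (mem_sigmaRule_neg.mpr (Or.inl ⟨B, hB, rfl⟩))),
      fun b hb => (hemb b).not.mp (h _ (mem_sigmaRule_neg.mpr (Or.inr ⟨b, hb, rfl⟩)))⟩
  · rintro ⟨hdl, hneg⟩ b' hb'
    rcases mem_sigmaRule_neg.mp hb' with ⟨B, hB, rfl⟩ | ⟨b, hb, rfl⟩
    · exact (hfresh B hB).mpr (hdl B hB)
    · exact (hemb b).not.mpr (hneg b hb)

theorem wReduct_sigmaRules :
    wReduct (sigmaO O) (⋃ r ∈ P, {sigmaRule r}) (sigmaSet O P I)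
      = sigmaEmbRule '' wReduct O P I := by
  ext r'
  simp only [wReduct, Set.mem_iUnion, Set.mem_singleton_iff, exists_prop, Set.mem_image,
    Set.mem_ofPred_eq]
  constructor
  · rintro ⟨_, ⟨r, hr, rfl⟩, -, hneg, rfl⟩
    obtain ⟨hdl, hneg⟩ := (sigmaRule_neg_unsat_iff O P I hr).mp hneg
    exact ⟨_, ⟨r, hr, hdl, hneg, rfl⟩, sigmaEmbRule_weakReduct r⟩
  · rintro ⟨_, ⟨r, hr, hdl, hneg, rfl⟩, rfl⟩
    refine ⟨sigmaRule r, ⟨r, hr, rfl⟩, fun A hA => ?_,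
      (sigmaRule_neg_unsat_iff O P I hr).mpr ⟨hdl, hneg⟩, sigmaEmbRule_weakReduct r⟩
    obtain ⟨a, h⟩ := exists_eq_atom_of_mem_sigmaRule_pos hA
    cases h

theorem wReduct_sigmaDLRules :
    wReduct (sigmaO O) { r' | ∃ B ∈ DLatoms P, r' = ⟨sigmaBAtom B, [], [.dl (sigmaEmbDL B)]⟩ }
        (sigmaSet O P I)
      = Rule.fact '' sigmaFacts O P I := by
  have hsat : ∀ B, SatB (sigmaO O) (sigmaSet O P I) (.dl (sigmaEmbDL B)) ↔ SatDL O I B :=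
    fun B => by rw [SatB, satDL_sigmaEmbDL, preimage_sigmaSet]
  ext r'
  simp only [wReduct, sigmaFacts, Set.mem_image, Set.mem_ofPred_eq]
  constructor
  · rintro ⟨_, ⟨B, hB, rfl⟩, -, hneg, rfl⟩
    refine ⟨_, ⟨B, hB, fun h => ?_, rfl⟩, rfl⟩
    exact hneg _ (List.mem_singleton_self _) ((hsat B).mpr h)
  · rintro ⟨_, ⟨B, hB, hunsat, rfl⟩, rfl⟩
    refine ⟨_, ⟨B, hB, rfl⟩, fun A hA => absurd hA List.not_mem_nil, ?_, rfl⟩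
    rintro b hb
    rw [List.mem_singleton.mp hb, hsat]
    exact hunsat

theorem wReduct_sigmaProg :
    wReduct (sigmaO O) (sigmaProg P) (sigmaSet O P I)
      = sigmaEmbRule '' wReduct O P I ∪ Rule.fact '' sigmaFacts O P I := by
  rw [sigmaProg, wReduct_union, wReduct_sigmaRules, wReduct_sigmaDLRules]

end Reduct

end Sigma

end DLP

open DLP in
theorem stmt_12_general (S : DLSig) (O : Set (Fml S.fol)) (P : Set (Rule S))
    (I : Set (PAtom S)) :
    WeakAS O P I ↔
      WeakAS (sigmaO O) (sigmaProg P)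
        ((sigmaEmbA '' I) ∪
          { a | ∃ B ∈ DLatoms P, ¬ SatDL O I B ∧ a = sigmaBAtom B }) := by
  change I = _ ↔ sigmaSet O P I = lfpGamma _ (wReduct _ _ (sigmaSet O P I))
  rw [wReduct_sigmaProg, lfpGamma_sigma O _ _ (preimage_sigmaFacts O P I), sigmaSet,
    image_union_eq_image_union_iff sigmaEmbA_injective (preimage_sigmaFacts O P I), eq_comm]

open DLP in
/-- `I` is a weak answer set of `K` iff
`I' = I ∪ {σ_B : B ∈ DL_P and I ⊭_O B}` is a weak answer set of `σ(K)`. -/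
theorem stmt_12 (S : DLSig) (O : Set (Fml S.fol)) (P : Set (Rule S))
    (hOfin : O.Finite) (hPfin : P.Finite)
    (hO : ∀ φ ∈ O, OntoFml φ) (hQ : ∀ A ∈ DLatoms P, OntoFml A.Q)
    (I : Set (PAtom S)) (hI : I ⊆ HB P) :
    WeakAS O P I ↔
      WeakAS (sigmaO O) (sigmaProg P)
        ((sigmaEmbA '' I) ∪
          { a | ∃ B ∈ DLatoms P, ¬ SatDL O I B ∧ a = sigmaBAtom B }) :=
  stmt_12_general S O P I
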